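/- arXiv:0912.0676 — 2 statements merged into one kernel-verified Lean document; each statement's English description precedes it below -/
import Mathlib

section
/- With σ and ε as above, the three cones σ, ε(σ), ε²(σ) pairwise intersect in {0}. Consequently, the collection Σ consisting of σ, ε(σ), ε²(σ) together with all of their faces is a fan in ℚ³, and Σ is stable under ε (note that ε³ is the identity). -/
open Pointwise

/-- The cone generated by a finite family of vectors: all nonnegative
rational linear combinations of the `g i`. -/
def coneGen {V : Type*} [AddCommGroup V] [Module ℚ V] {n : ℕ} (g : Fin n → V) : Set V :=
  {x | ∃ c : Fin n → ℚ, (∀ i, 0 ≤ c i) ∧ x = ∑ i, c i • g i}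

/-- A set is a cone if it is the cone generated by some finite family of vectors. -/
def IsCone {V : Type*} [AddCommGroup V] [Module ℚ V] (C : Set V) : Prop :=
  ∃ (n : ℕ) (g : Fin n → V), C = coneGen g

/-- `F` is a face of the cone `C` if `F = C ∩ l⁻¹(0)` for some linear form `l`
nonnegative on `C`. -/
def IsFaceOf {V : Type*} [AddCommGroup V] [Module ℚ V] (F C : Set V) : Prop :=
  ∃ l : V →ₗ[ℚ] ℚ, (∀ x ∈ C, 0 ≤ l x) ∧ F = C ∩ {x | l x = 0}

/-- A fan: a finite collection of strictly convex cones, closed under taking faces,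
such that the intersection of any two of its cones is a face of each. -/
def IsFan {V : Type*} [AddCommGroup V] [Module ℚ V] (S : Set (Set V)) : Prop :=
  S.Finite ∧
  (∀ C ∈ S, IsCone C ∧ C ∩ (-C) = ({0} : Set V)) ∧
  (∀ C ∈ S, ∀ F : Set V, IsFaceOf F C → F ∈ S) ∧
  (∀ C ∈ S, ∀ C' ∈ S, IsFaceOf (C ∩ C') C ∧ IsFaceOf (C ∩ C') C')

/-- A cone of the collection `S` is maximal if it is not strictly contained in
another cone of `S`. -/
def IsMaximalIn {V : Type*} [AddCommGroup V] [Module ℚ V] (S : Set (Set V)) (C : Set V) : Prop :=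
  C ∈ S ∧ ∀ C' ∈ S, C ⊆ C' → C' = C

/-- A fan is quasi-projective if there is a family of linear forms indexed by its
maximal cones which agree on pairwise intersections and satisfy the strict
inequality condition. -/
def IsQuasiProjectiveFan {V : Type*} [AddCommGroup V] [Module ℚ V] (S : Set (Set V)) : Prop :=
  ∃ l : Set V → (V →ₗ[ℚ] ℚ),
    (∀ C, IsMaximalIn S C → ∀ C', IsMaximalIn S C' → ∀ x ∈ C ∩ C', l C x = l C' x) ∧
    (∀ C, IsMaximalIn S C → ∀ C', IsMaximalIn S C' → C ≠ C' →
      ∀ x ∈ C, x ∉ C' → l C' x < l C x)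

/-- The generators `5u+v−5w`, `−5u−5v+14w`, `4u−v` of the cone `σ`. -/
def genS : Fin 3 → (Fin 3 → ℚ) := ![![5, 1, -5], ![-5, -5, 14], ![4, -1, 0]]

/-- The cone `σ = Cone(5u+v−5w, −5u−5v+14w, 4u−v)` in `ℚ³`. -/
def coneSigma : Set (Fin 3 → ℚ) := coneGen genS

/-- The matrix of `ε` in the standard basis `(u, v, w)`:
`ε(u) = v`, `ε(v) = −u−v`, `ε(w) = w`. -/
def epsMat : Matrix (Fin 3) (Fin 3) ℚ := ![![0, -1, 0], ![1, -1, 0], ![0, 0, 1]]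

/-- The linear automorphism `ε : ℚ³ → ℚ³`. -/
def eps : (Fin 3 → ℚ) →ₗ[ℚ] (Fin 3 → ℚ) := Matrix.toLin' epsMat

/-- The collection `Σ` consisting of `σ`, `ε(σ)`, `ε²(σ)` together with all of
their faces. -/
def fanSigma : Set (Set (Fin 3 → ℚ)) :=
  {coneSigma, ⇑eps '' coneSigma, ⇑eps '' (⇑eps '' coneSigma)} ∪
    {C | IsFaceOf C coneSigma ∨ IsFaceOf C (⇑eps '' coneSigma) ∨
      IsFaceOf C (⇑eps '' (⇑eps '' coneSigma))}

/-! The cone `σ` is simplicial: its generators are linearly independent. Hence its faces are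
exactly the subcones spanned by subsets of the generators, two faces meet in the face spanned by
their common generators, and `{0}` is a face, so that `σ` is strictly convex. The automorphism `ε`
has order three and permutes `σ`, `ε(σ)`, `ε²(σ)` cyclically, so everything transfers to the two
other cones and the collection of their faces is `ε`-stable. A linear form positive on the
generators of `σ` and negative on those of `ε(σ)` gives `σ ∩ ε(σ) = {0}`; applying `ε` once and
twice gives the other two intersections. Faces of different maximal cones therefore meet in
`{0}`, a common face. -/

theorem LinearIndependent.exists_linearMap_apply_eq {ι K V : Type*} [Field K] [AddCommGroup V]
    [Module K V] {g : ι → V} (hg : LinearIndependent K g) (a : ι → K) :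
    ∃ l : V →ₗ[K] K, ∀ i, l (g i) = a i := by
  obtain ⟨l, hl⟩ := LinearMap.exists_extend (Finsupp.linearCombination K a ∘ₗ hg.repr)
  refine ⟨l, fun i => ?_⟩
  have := LinearMap.congr_fun hl ⟨g i, Submodule.subset_span (Set.mem_range_self i)⟩
  rw [LinearMap.comp_apply, LinearMap.comp_apply, hg.repr_eq_single i _ rfl] at this
  simpa using this

section Cone

variable {V : Type*} [AddCommGroup V] [Module ℚ V] {n : ℕ}

theorem inter_neg_eq_zero_of_isFaceOf_zero {C : Set V} (h0 : IsFaceOf {0} C) : C ∩ -C = {0} := by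
  obtain ⟨l, hl, hC⟩ := h0
  have h0C : (0 : V) ∈ C := (hC.le rfl).1
  refine Set.Subset.antisymm (fun x ⟨hx, hnx⟩ => ?_) (by simpa using h0C)
  have hx0 : l x = 0 := le_antisymm (by simpa using hl _ hnx) (hl x hx)
  exact hC.ge ⟨hx, hx0⟩

def coneGenOn (g : Fin n → V) (s : Set (Fin n)) : Set V :=
  {x | ∃ c : Fin n → ℚ, (∀ i, 0 ≤ c i) ∧ (∀ i ∉ s, c i = 0) ∧ x = ∑ i, c i • g i}

variable {g : Fin n → V} {s t : Set (Fin n)}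

@[simp]
theorem coneGenOn_univ (g : Fin n → V) : coneGenOn g Set.univ = coneGen g := by
  ext x
  exact ⟨fun ⟨c, hc, _, hx⟩ => ⟨c, hc, hx⟩, fun ⟨c, hc, hx⟩ => ⟨c, hc, by simp, hx⟩⟩

theorem zero_mem_coneGenOn (g : Fin n → V) (s : Set (Fin n)) : (0 : V) ∈ coneGenOn g s :=
  ⟨0, fun _ => le_rfl, fun _ _ => rfl, by simp⟩

theorem coneGenOn_mono (h : s ⊆ t) : coneGenOn g s ⊆ coneGenOn g t := by
  rintro x ⟨c, hc, hs, rfl⟩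
  exact ⟨c, hc, fun i hi => hs i (fun his => hi (h his)), rfl⟩

theorem coneGenOn_subset_coneGen (g : Fin n → V) (s : Set (Fin n)) :
    coneGenOn g s ⊆ coneGen g :=
  coneGenOn_univ g ▸ coneGenOn_mono (Set.subset_univ s)

theorem mem_coneGenOn_of_mem {i : Fin n} (hi : i ∈ s) : g i ∈ coneGenOn g s := by
  classical
  refine ⟨Pi.single i 1, fun j => ?_, fun j hj => ?_, by simp [Pi.single_apply]⟩
  · by_cases h : j = i <;> simp [h]
  · simp [show j ≠ i from fun h => hj (h ▸ hi)]

theorem coneGenOn_empty (g : Fin n → V) : coneGenOn g ∅ = {0} := by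
  refine Set.Subset.antisymm ?_ (by simpa using zero_mem_coneGenOn g ∅)
  rintro x ⟨c, -, hc, rfl⟩
  simp [hc _ (Set.notMem_empty _)]

theorem isCone_coneGenOn (g : Fin n → V) (s : Set (Fin n)) : IsCone (coneGenOn g s) := by
  classical
  refine ⟨n, s.indicator g, Set.Subset.antisymm ?_ ?_⟩
  · rintro x ⟨c, hc, hs, rfl⟩
    refine ⟨c, hc, Finset.sum_congr rfl fun i _ => ?_⟩
    by_cases h : i ∈ s <;> simp [h, hs i]
  · rintro x ⟨c, hc, rfl⟩
    refine ⟨s.indicator c, fun i => Set.indicator_nonneg (fun i _ => hc i) i,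
      fun i hi => Set.indicator_of_notMem hi c, Finset.sum_congr rfl fun i _ => ?_⟩
    by_cases h : i ∈ s <;> simp [h]

theorem image_coneGenOn {W : Type*} [AddCommGroup W] [Module ℚ W] (f : V →ₗ[ℚ] W)
    (g : Fin n → V) (s : Set (Fin n)) : f '' coneGenOn g s = coneGenOn (f ∘ g) s := by
  ext x
  constructor
  · rintro ⟨y, ⟨c, hc, hs, rfl⟩, rfl⟩
    exact ⟨c, hc, hs, by simp [map_sum]⟩
  · rintro ⟨c, hc, hs, rfl⟩
    exact ⟨∑ i, c i • g i, ⟨c, hc, hs, rfl⟩, by simp [map_sum]⟩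

theorem image_coneGen {W : Type*} [AddCommGroup W] [Module ℚ W] (f : V →ₗ[ℚ] W)
    (g : Fin n → V) : f '' coneGen g = coneGen (f ∘ g) := by
  simpa using image_coneGenOn f g Set.univ

theorem map_nonneg_of_mem_coneGenOn {l : V →ₗ[ℚ] ℚ} (hl : ∀ i ∈ s, 0 ≤ l (g i)) {x : V}
    (hx : x ∈ coneGenOn g s) : 0 ≤ l x := by
  obtain ⟨c, hc, hs, rfl⟩ := hx
  rw [map_sum]
  refine Finset.sum_nonneg fun i _ => ?_
  by_cases h : i ∈ s
  · simpa using mul_nonneg (hc i) (hl i h)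
  · simp [hs i h]

theorem coneGenOn_inter_ker {l : V →ₗ[ℚ] ℚ} (hl : ∀ i ∈ s, 0 ≤ l (g i)) :
    coneGenOn g s ∩ {x | l x = 0} = coneGenOn g {i | i ∈ s ∧ l (g i) = 0} := by
  ext x
  constructor
  · rintro ⟨⟨c, hc, hs, rfl⟩, hx0⟩
    have hterm : ∀ i ∈ Finset.univ, 0 ≤ c i * l (g i) := fun i _ => by
      by_cases h : i ∈ s
      · exact mul_nonneg (hc i) (hl i h)
      · simp [hs i h]
    have hsum : ∑ i, c i * l (g i) = 0 := by simpa [map_sum] using hx0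
    refine ⟨c, hc, fun i hi => ?_, rfl⟩
    by_cases h : i ∈ s
    · exact (mul_eq_zero.mp ((Finset.sum_eq_zero_iff_of_nonneg hterm).mp hsum i
        (Finset.mem_univ i))).resolve_right fun h0 => hi ⟨h, h0⟩
    · exact hs i h
  · intro hx
    refine ⟨coneGenOn_mono (fun i hi => hi.1) hx, ?_⟩
    obtain ⟨c, -, hs, rfl⟩ := hx
    refine (map_sum l _ _).trans (Finset.sum_eq_zero fun i _ => ?_)
    by_cases h : i ∈ s ∧ l (g i) = 0
    · simp [h.2]
    · simp [hs i h]

theorem IsFaceOf.exists_eq_coneGenOn {F : Set V} (h : IsFaceOf F (coneGenOn g s)) :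
    ∃ t, F = coneGenOn g t := by
  obtain ⟨l, hl, rfl⟩ := h
  exact ⟨_, coneGenOn_inter_ker fun i hi => hl _ (mem_coneGenOn_of_mem hi)⟩

theorem coneGen_inter_eq_zero_of_separates {m : ℕ} {h : Fin m → V} (l : V →ₗ[ℚ] ℚ)
    (hg : ∀ i, 0 < l (g i)) (hh : ∀ j, l (h j) < 0) : coneGen g ∩ coneGen h = {0} := by
  refine Set.Subset.antisymm (fun x ⟨hxg, hxh⟩ => ?_) ?_
  · rw [← coneGenOn_univ] at hxg hxh
    have hx0 : l x = 0 := by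
      have hnonpos :=
        map_nonneg_of_mem_coneGenOn (l := -l) (fun j _ => by simpa using (hh j).le) hxh
      exact le_antisymm (by simpa using hnonpos)
        (map_nonneg_of_mem_coneGenOn (fun i _ => (hg i).le) hxg)
    have hker : {i | i ∈ Set.univ ∧ l (g i) = 0} = ∅ := by
      ext i
      simp [(hg i).ne']
    rw [← coneGenOn_empty g, ← hker, ← coneGenOn_inter_ker fun i _ => (hg i).le]
    exact ⟨hxg, hx0⟩
  · rintro x rfl
    rw [← coneGenOn_univ, ← coneGenOn_univ]
    exact ⟨zero_mem_coneGenOn g _, zero_mem_coneGenOn h _⟩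

theorem coneGenOn_inter_coneGenOn (hg : LinearIndependent ℚ g) :
    coneGenOn g s ∩ coneGenOn g t = coneGenOn g (s ∩ t) := by
  refine Set.Subset.antisymm ?_ fun x hx => ⟨coneGenOn_mono Set.inter_subset_left hx,
    coneGenOn_mono Set.inter_subset_right hx⟩
  rintro x ⟨⟨a, ha, has, rfl⟩, ⟨b, -, hbt, hab⟩⟩
  refine ⟨a, ha, fun i hi => ?_, rfl⟩
  rcases not_and_or.mp hi with h | h
  · exact has i h
  · rw [Fintype.linearIndependent_iffₛ.mp hg a b hab i]; exact hbt i h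

theorem isFaceOf_coneGenOn_of_subset (hg : LinearIndependent ℚ g) (hts : t ⊆ s) :
    IsFaceOf (coneGenOn g t) (coneGenOn g s) := by
  classical
  obtain ⟨l, hl⟩ := hg.exists_linearMap_apply_eq fun i => if i ∈ t then 0 else 1
  have hl0 : ∀ i ∈ s, 0 ≤ l (g i) := fun i _ => by rw [hl]; split_ifs <;> norm_num
  refine ⟨l, fun _ => map_nonneg_of_mem_coneGenOn hl0, ?_⟩
  rw [coneGenOn_inter_ker hl0]
  congr 1
  ext i
  simp only [Set.mem_ofPred_eq, hl]
  by_cases h : i ∈ t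
  · simp [h, hts h]
  · simp [h]

theorem isFaceOf_coneGen_iff (hg : LinearIndependent ℚ g) {F : Set V} :
    IsFaceOf F (coneGen g) ↔ ∃ s, F = coneGenOn g s := by
  rw [← coneGenOn_univ]
  refine ⟨IsFaceOf.exists_eq_coneGenOn, ?_⟩
  rintro ⟨s, rfl⟩
  exact isFaceOf_coneGenOn_of_subset hg (Set.subset_univ s)

theorem coneGenOn_inter_neg (hg : LinearIndependent ℚ g) (s : Set (Fin n)) :
    coneGenOn g s ∩ -coneGenOn g s = {0} :=
  inter_neg_eq_zero_of_isFaceOf_zero <|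
    coneGenOn_empty g ▸ isFaceOf_coneGenOn_of_subset hg (Set.empty_subset s)

end Cone

section simplicialFan

variable {V ι : Type*} [AddCommGroup V] [Module ℚ V] {n : ℕ} {G : ι → Fin n → V}

def simplicialFan (G : ι → Fin n → V) : Set (Set V) :=
  Set.range fun p : ι × Set (Fin n) => coneGenOn (G p.1) p.2

theorem coneGenOn_mem_simplicialFan (k : ι) (s : Set (Fin n)) :
    coneGenOn (G k) s ∈ simplicialFan G :=
  ⟨(k, s), rfl⟩

theorem isFaceOf_inter_of_simplicialFan (hG : ∀ k, LinearIndependent ℚ (G k))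
    (hsep : Pairwise fun k k' => coneGen (G k) ∩ coneGen (G k') = {0}) (k k' : ι)
    (s t : Set (Fin n)) :
    IsFaceOf (coneGenOn (G k) s ∩ coneGenOn (G k') t) (coneGenOn (G k) s) := by
  rcases eq_or_ne k k' with rfl | hkk'
  · rw [coneGenOn_inter_coneGenOn (hG k)]
    exact isFaceOf_coneGenOn_of_subset (hG k) Set.inter_subset_left
  · have h0 : coneGenOn (G k) s ∩ coneGenOn (G k') t = {0} := by
      refine Set.Subset.antisymm ?_ ?_
      · exact hsep hkk' ▸ Set.inter_subset_inter (coneGenOn_subset_coneGen _ s)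
          (coneGenOn_subset_coneGen _ t)
      · rintro x rfl
        exact ⟨zero_mem_coneGenOn _ s, zero_mem_coneGenOn _ t⟩
    rw [h0, ← coneGenOn_empty (G k)]
    exact isFaceOf_coneGenOn_of_subset (hG k) (Set.empty_subset s)

theorem isFan_simplicialFan [Finite ι] (hG : ∀ k, LinearIndependent ℚ (G k))
    (hsep : Pairwise fun k k' => coneGen (G k) ∩ coneGen (G k') = {0}) :
    IsFan (simplicialFan G) := by
  refine ⟨Set.finite_range _, ?_, ?_, ?_⟩
  · rintro _ ⟨⟨k, s⟩, rfl⟩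
    exact ⟨isCone_coneGenOn _ s, coneGenOn_inter_neg (hG k) s⟩
  · rintro _ ⟨⟨k, s⟩, rfl⟩ F hF
    obtain ⟨t, rfl⟩ := hF.exists_eq_coneGenOn
    exact coneGenOn_mem_simplicialFan k t
  · rintro _ ⟨⟨k, s⟩, rfl⟩ _ ⟨⟨k', t⟩, rfl⟩
    refine ⟨isFaceOf_inter_of_simplicialFan hG hsep k k' s t, ?_⟩
    rw [Set.inter_comm]
    exact isFaceOf_inter_of_simplicialFan hG hsep k' k t s

theorem image_mem_simplicialFan (f : V →ₗ[ℚ] V) (π : ι → ι) (hf : ∀ k, f ∘ G k = G (π k))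
    {C : Set V} (hC : C ∈ simplicialFan G) : f '' C ∈ simplicialFan G := by
  obtain ⟨⟨k, s⟩, rfl⟩ := hC
  rw [image_coneGenOn, hf]
  exact coneGenOn_mem_simplicialFan (π k) s

end simplicialFan


theorem eps_apply (x : Fin 3 → ℚ) : eps x = ![-x 1, x 0 - x 1, x 2] := by
  rw [eps, Matrix.toLin'_apply]
  ext i
  fin_cases i <;> simp [epsMat, Matrix.mulVec, dotProduct, Fin.sum_univ_three]
  ring

theorem eps_eps_eps_apply (x : Fin 3 → ℚ) : eps (eps (eps x)) = x := by
  ext i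
  fin_cases i <;> simp [eps_apply]
  ring

def sigmaGen (k : Fin 3) : Fin 3 → Fin 3 → ℚ := (⇑eps)^[k] ∘ genS

theorem linearIndependent_genS : LinearIndependent ℚ genS :=
  Matrix.linearIndependent_rows_of_det_ne_zero (A := Matrix.of genS) (by
    rw [Matrix.det_fin_three]; norm_num [genS, Matrix.cons_val_two])

theorem injective_eps : Function.Injective eps :=
  Function.LeftInverse.injective (g := fun x => eps (eps x)) eps_eps_eps_apply

theorem linearIndependent_sigmaGen (k : Fin 3) : LinearIndependent ℚ (sigmaGen k) := by
  have := linearIndependent_genS.map' (eps ^ (k : ℕ)) (LinearMap.ker_eq_bot.mpr (by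
    rw [Module.End.coe_pow]; exact injective_eps.iterate _))
  rwa [Module.End.coe_pow] at this

theorem eps_comp_sigmaGen (k : Fin 3) : ⇑eps ∘ sigmaGen k = sigmaGen (k + 1) := by
  fin_cases k
  · rfl
  · rfl
  · ext1 i
    exact eps_eps_eps_apply (genS i)

theorem coneGen_sigmaGen_succ (k : Fin 3) :
    coneGen (sigmaGen (k + 1)) = ⇑eps '' coneGen (sigmaGen k) := by
  rw [image_coneGen, eps_comp_sigmaGen]

theorem coneGen_sigmaGen_zero : coneGen (sigmaGen 0) = coneSigma := rfl

theorem coneGen_sigmaGen_one : coneGen (sigmaGen 1) = ⇑eps '' coneSigma :=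
  coneGen_sigmaGen_succ 0

theorem coneGen_sigmaGen_two : coneGen (sigmaGen 2) = ⇑eps '' (⇑eps '' coneSigma) := by
  rw [← coneGen_sigmaGen_one]
  exact coneGen_sigmaGen_succ 1

theorem eps_image_inter_eq_zero {A B : Set (Fin 3 → ℚ)} (h : A ∩ B = {0}) :
    ⇑eps '' A ∩ ⇑eps '' B = {0} := by
  rw [← Set.image_inter injective_eps, h, Set.image_singleton, map_zero]

theorem coneSigma_inter_eps_image : coneSigma ∩ ⇑eps '' coneSigma = {0} := by
  rw [← coneGen_sigmaGen_one, ← coneGen_sigmaGen_zero]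
  refine coneGen_inter_eq_zero_of_separates (dotProductEquiv ℚ (Fin 3) ![-4, -19, -8])
    (fun i => ?_) (fun i => ?_) <;>
    fin_cases i <;> simp [sigmaGen, genS, eps_apply, dotProduct, Fin.sum_univ_three] <;> norm_num

theorem eps_image_inter_eps_image_image :
    ⇑eps '' coneSigma ∩ ⇑eps '' (⇑eps '' coneSigma) = {0} :=
  eps_image_inter_eq_zero coneSigma_inter_eps_image

theorem coneSigma_inter_eps_image_image : coneSigma ∩ ⇑eps '' (⇑eps '' coneSigma) = {0} := by
  have h3 : ⇑eps '' (⇑eps '' (⇑eps '' coneSigma)) = coneSigma := by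
    simp [Set.image_image, eps_eps_eps_apply]
  calc coneSigma ∩ ⇑eps '' (⇑eps '' coneSigma)
      = ⇑eps '' (⇑eps '' (⇑eps '' coneSigma)) ∩ ⇑eps '' (⇑eps '' coneSigma) := by rw [h3]
    _ = {0} := by
      rw [Set.inter_comm]
      exact eps_image_inter_eq_zero eps_image_inter_eps_image_image

theorem pairwise_coneGen_sigmaGen_inter :
    Pairwise fun k k' => coneGen (sigmaGen k) ∩ coneGen (sigmaGen k') = {0} := by
  have h01 := coneSigma_inter_eps_image
  have h12 := eps_image_inter_eps_image_image
  have h02 := coneSigma_inter_eps_image_image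
  intro k k' hkk'
  match k, k', hkk' with
  | 0, 1, _ | 0, 2, _ | 1, 2, _ =>
    simpa only [coneGen_sigmaGen_zero, coneGen_sigmaGen_one, coneGen_sigmaGen_two]
  | 1, 0, _ | 2, 0, _ | 2, 1, _ =>
    rw [Set.inter_comm]
    simpa only [coneGen_sigmaGen_zero, coneGen_sigmaGen_one, coneGen_sigmaGen_two]
  | 0, 0, h | 1, 1, h | 2, 2, h => exact absurd rfl h

theorem fanSigma_eq_simplicialFan : fanSigma = simplicialFan sigmaGen := by
  have hface (k : Fin 3) (C : Set (Fin 3 → ℚ)) :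
      IsFaceOf C (coneGen (sigmaGen k)) ↔ ∃ s, C = coneGenOn (sigmaGen k) s :=
    isFaceOf_coneGen_iff (linearIndependent_sigmaGen k)
  rw [fanSigma, ← coneGen_sigmaGen_two, ← coneGen_sigmaGen_one, ← coneGen_sigmaGen_zero]
  ext C
  constructor
  · rintro ((rfl | rfl | rfl) | (h | h | h))
    · exact ⟨(0, Set.univ), coneGenOn_univ _⟩
    · exact ⟨(1, Set.univ), coneGenOn_univ _⟩
    · exact ⟨(2, Set.univ), coneGenOn_univ _⟩
    · obtain ⟨s, rfl⟩ := (hface 0 C).mp h; exact coneGenOn_mem_simplicialFan 0 s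
    · obtain ⟨s, rfl⟩ := (hface 1 C).mp h; exact coneGenOn_mem_simplicialFan 1 s
    · obtain ⟨s, rfl⟩ := (hface 2 C).mp h; exact coneGenOn_mem_simplicialFan 2 s
  · rintro ⟨⟨k, s⟩, rfl⟩
    have h := (hface k _).mpr ⟨s, rfl⟩
    right
    match k with
    | 0 => exact Or.inl h
    | 1 => exact Or.inr (Or.inl h)
    | 2 => exact Or.inr (Or.inr h)

/-- The cones `σ`, `ε(σ)`, `ε²(σ)` pairwise intersect in `{0}`;
consequently `Σ` (these cones and all their faces) is a fan in `ℚ³`, stable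
under `ε`. -/
theorem fanSigma_isFan_and_stable :
    (coneSigma ∩ (⇑eps '' coneSigma) = ({0} : Set (Fin 3 → ℚ)) ∧
      (⇑eps '' coneSigma) ∩ (⇑eps '' (⇑eps '' coneSigma)) = ({0} : Set (Fin 3 → ℚ)) ∧
      coneSigma ∩ (⇑eps '' (⇑eps '' coneSigma)) = ({0} : Set (Fin 3 → ℚ))) ∧
    IsFan fanSigma ∧
    (∀ C ∈ fanSigma, ⇑eps '' C ∈ fanSigma) := by
  refine ⟨⟨coneSigma_inter_eps_image, eps_image_inter_eps_image_image,
    coneSigma_inter_eps_image_image⟩, ?_, ?_⟩ <;> rw [fanSigma_eq_simplicialFan]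
  · exact isFan_simplicialFan linearIndependent_sigmaGen pairwise_coneGen_sigmaGen_inter
  · exact fun C => image_mem_simplicialFan eps (· + 1) eps_comp_sigmaGen
end

section
/- Let Σ be a fan in a finite-dimensional ℚ-vector space V having at most two maximal cones (i.e., there exist cones σ₁, σ₂ ∈ Σ such that every cone of Σ is contained in σ₁ or in σ₂). Then Σ is quasi-projective. -/
open Pointwise

/-!
When every maximal cone is `σ` or `σ'`, it suffices to find a linear form `f` vanishing on
`σ ∩ σ'`, positive on `σ \ σ'` and negative on `σ' \ σ`, and to take `l_σ = f`, `l_σ' = 0`.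
For `f` take a form in the relative interior of the dual of `σ - σ'`: nonnegative on `σ`,
nonpositive on `σ'`, and nonzero on every generator on which some such form is nonzero.
If `f` vanishes on a generator `x` of `σ`, then Farkas' lemma gives `-x ∈ σ - σ'`, i.e.
`a + x ∈ σ'` for some `a ∈ σ`; as `σ ∩ σ'` is a face of `σ`, this forces `x ∈ σ'`. So on `σ`,
`f` vanishes only on `σ ∩ σ'`, and symmetrically on `σ'`. Farkas' lemma is proved by
Fourier–Motzkin elimination of one generator at a time.
-/

section ConeGen

variable {V W : Type*} [AddCommGroup V] [Module ℚ V] [AddCommGroup W] [Module ℚ W] {n : ℕ}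

lemma mem_coneGen (g : Fin n → V) (i : Fin n) : g i ∈ coneGen g :=
  ⟨Pi.single i 1, fun j => by by_cases h : j = i <;> simp [h], by simp [Pi.single_apply]⟩

lemma zero_mem_coneGen (g : Fin n → V) : (0 : V) ∈ coneGen g :=
  ⟨0, fun _ => le_rfl, by simp⟩

lemma add_mem_coneGen {g : Fin n → V} {x y : V} (hx : x ∈ coneGen g) (hy : y ∈ coneGen g) :
    x + y ∈ coneGen g := by
  obtain ⟨c, hc, rfl⟩ := hx
  obtain ⟨d, hd, rfl⟩ := hy
  exact ⟨c + d, fun i => add_nonneg (hc i) (hd i), by simp [add_smul, Finset.sum_add_distrib]⟩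

lemma smul_mem_coneGen {g : Fin n → V} {x : V} {a : ℚ} (ha : 0 ≤ a) (hx : x ∈ coneGen g) :
    a • x ∈ coneGen g := by
  obtain ⟨c, hc, rfl⟩ := hx
  exact ⟨a • c, fun i => mul_nonneg ha (hc i), by simp [Finset.smul_sum, mul_smul]⟩

lemma sum_mem_coneGen {g : Fin n → V} {ι : Type*} (s : Finset ι) {p : ι → V}
    (hp : ∀ i ∈ s, p i ∈ coneGen g) : ∑ i ∈ s, p i ∈ coneGen g :=
  Finset.sum_induction p (· ∈ coneGen g) (fun _ _ => add_mem_coneGen) (zero_mem_coneGen g) hp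

lemma apply_nonneg_of_mem_coneGen {g : Fin n → V} (f : V →ₗ[ℚ] ℚ) (hf : ∀ i, 0 ≤ f (g i))
    {x : V} (hx : x ∈ coneGen g) : 0 ≤ f x := by
  obtain ⟨c, hc, rfl⟩ := hx
  simpa using Finset.sum_nonneg fun i _ => mul_nonneg (hc i) (hf i)

lemma coneGen_comp (φ : V →ₗ[ℚ] W) (g : Fin n → V) : coneGen (φ ∘ g) = φ '' coneGen g := by
  ext y
  constructor
  · rintro ⟨c, hc, rfl⟩
    exact ⟨_, ⟨c, hc, rfl⟩, by simp⟩
  · rintro ⟨_, ⟨c, hc, rfl⟩, rfl⟩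
    exact ⟨c, hc, by simp⟩

lemma mem_coneGen_cons_iff (u : V) (g : Fin n → V) (x : V) :
    x ∈ coneGen (Fin.cons u g : Fin (n + 1) → V) ↔
      ∃ t : ℚ, 0 ≤ t ∧ ∃ y ∈ coneGen g, x = t • u + y := by
  constructor
  · rintro ⟨c, hc, rfl⟩
    exact ⟨c 0, hc 0, _, ⟨Fin.tail c, fun i => hc i.succ, rfl⟩,
      by simp [Fin.sum_univ_succ, Fin.tail]⟩
  · rintro ⟨t, ht, _, ⟨c, hc, rfl⟩, rfl⟩
    exact ⟨Fin.cons t c, Fin.cases ht hc, by simp [Fin.sum_univ_succ]⟩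

end ConeGen

section Farkas

variable {V : Type*} [AddCommGroup V] [Module ℚ V]

theorem exists_dual_neg_of_notMem_coneGen {n : ℕ} (g : Fin n → V) {w : V}
    (hw : w ∉ coneGen g) : ∃ f : V →ₗ[ℚ] ℚ, (∀ i, 0 ≤ f (g i)) ∧ f w < 0 := by
  induction n generalizing w with
  | zero =>
    have hw0 : w ≠ 0 := by rintro rfl; exact hw (zero_mem_coneGen g)
    obtain ⟨f, hf⟩ := Module.Projective.exists_dual_eq_one ℚ hw0
    exact ⟨-f, finZeroElim, by simp [hf]⟩
  | succ n ih =>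
    obtain ⟨u, g, rfl⟩ : ∃ u g', g = Fin.cons u g' := ⟨_, _, (Fin.cons_self_tail g).symm⟩
    have hw' : w ∉ coneGen g := fun h =>
      hw ((mem_coneGen_cons_iff u g w).2 ⟨0, le_rfl, w, h, by simp⟩)
    obtain ⟨f, hfg, hfw⟩ := ih g hw'
    rcases le_or_gt 0 (f u) with hfu | hfu
    · exact ⟨f, Fin.cases hfu hfg, hfw⟩
    -- Fourier–Motzkin: `π` kills `u`, and a certificate against `π ∘ g` pulls back along `π`.
    set π : V →ₗ[ℚ] V := (-f u) • LinearMap.id + f.smulRight u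
    have hπu : π u = 0 := by simp [π]
    have hπw : π w ∉ coneGen (π ∘ g) := by
      rintro hmem
      rw [coneGen_comp] at hmem
      obtain ⟨y, hy, hπy⟩ := hmem
      simp only [π, LinearMap.add_apply, LinearMap.smul_apply, LinearMap.id_apply,
        LinearMap.smulRight_apply] at hπy
      refine hw ((mem_coneGen_cons_iff u g w).2
        ⟨(f y - f w) / (-f u), div_nonneg ?_ (by linarith), y, hy, ?_⟩)
      · linarith [apply_nonneg_of_mem_coneGen f hfg hy]
      · apply smul_right_injective V (neg_ne_zero.2 hfu.ne)
        simp only [smul_add, smul_smul, mul_div_cancel₀ _ (neg_ne_zero.2 hfu.ne)]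
        linear_combination (norm := module) -hπy
    obtain ⟨k, hkg, hkw⟩ := ih (π ∘ g) hπw
    exact ⟨k ∘ₗ π, Fin.cases (by simp [hπu]) hkg, hkw⟩

theorem mem_coneGen_of_forall_dual_nonneg {n : ℕ} (g : Fin n → V) {w : V}
    (hw : ∀ f : V →ₗ[ℚ] ℚ, (∀ i, 0 ≤ f (g i)) → 0 ≤ f w) : w ∈ coneGen g := by
  by_contra h
  obtain ⟨f, hfg, hfw⟩ := exists_dual_neg_of_notMem_coneGen g h
  exact (hw f hfg).not_gt hfw

end Farkas

section Separation

variable {V : Type*} [AddCommGroup V] [Module ℚ V]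

lemma exists_dual_nonneg_forall_apply_eq_zero {ι : Type*} [Fintype ι] (u : ι → V) :
    ∃ f₀ : V →ₗ[ℚ] ℚ, (∀ k, 0 ≤ f₀ (u k)) ∧
      ∀ k, f₀ (u k) = 0 → ∀ f : V →ₗ[ℚ] ℚ, (∀ j, 0 ≤ f (u j)) → f (u k) = 0 := by
  have hwit : ∀ k, ∃ F : V →ₗ[ℚ] ℚ, (∀ j, 0 ≤ F (u j)) ∧
      ∀ f : V →ₗ[ℚ] ℚ, (∀ j, 0 ≤ f (u j)) → 0 < f (u k) → 0 < F (u k) := by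
    intro k
    by_cases hk : ∃ f : V →ₗ[ℚ] ℚ, (∀ j, 0 ≤ f (u j)) ∧ 0 < f (u k)
    · obtain ⟨f, hf, hfk⟩ := hk
      exact ⟨f, hf, fun _ _ _ => hfk⟩
    · exact ⟨0, fun _ => le_rfl, fun f hf hfk => (hk ⟨f, hf, hfk⟩).elim⟩
  choose F hF hFpos using hwit
  have hsum : ∀ j, 0 ≤ (∑ k, F k) (u j) := fun j => by
    simpa using Finset.sum_nonneg fun k _ => hF k j
  refine ⟨∑ k, F k, hsum, fun k hk f hf => le_antisymm ?_ (hf k)⟩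
  by_contra! hfk
  have hle : F k (u k) ≤ (∑ k, F k) (u k) := by
    simpa using Finset.single_le_sum (fun k' _ => hF k' k) (Finset.mem_univ k)
  linarith [hFpos k f hf hfk]

lemma exists_dual_nonneg_neg_mem_coneGen_of_apply_eq_zero {n : ℕ} (u : Fin n → V) :
    ∃ f₀ : V →ₗ[ℚ] ℚ, (∀ k, 0 ≤ f₀ (u k)) ∧ ∀ k, f₀ (u k) = 0 → -u k ∈ coneGen u := by
  obtain ⟨f₀, hf₀, hzero⟩ := exists_dual_nonneg_forall_apply_eq_zero u
  exact ⟨f₀, hf₀, fun k hk => mem_coneGen_of_forall_dual_nonneg u fun f hf => by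
    simp [hzero k hk f hf]⟩

lemma coneGen_append_neg_subset {m n : ℕ} (g : Fin m → V) (h : Fin n → V) :
    coneGen (Fin.append g (-h)) ⊆ coneGen g - coneGen h := by
  rintro _ ⟨c, hc, rfl⟩
  refine ⟨_, ⟨fun i => c (Fin.castAdd n i), fun i => hc _, rfl⟩,
    _, ⟨fun j => c (Fin.natAdd m j), fun j => hc _, rfl⟩, ?_⟩
  simp [Fin.sum_univ_add, sub_eq_add_neg]

lemma mem_of_add_mem_of_isFaceOf_inter {m : ℕ} {g : Fin m → V} {σ' : Set V}
    (hface : IsFaceOf (coneGen g ∩ σ') (coneGen g)) {a x : V} (ha : a ∈ coneGen g)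
    (hx : x ∈ coneGen g) (hax : a + x ∈ σ') : x ∈ σ' := by
  obtain ⟨l, hl, hτ⟩ := hface
  have hlax : l (a + x) = 0 := by
    have hmem : a + x ∈ coneGen g ∩ σ' := ⟨add_mem_coneGen ha hx, hax⟩
    rw [hτ] at hmem
    exact hmem.2
  have hlx : l x = 0 := by
    rw [map_add] at hlax
    linarith [hl a ha, hl x hx]
  have hmem : x ∈ coneGen g ∩ σ' := by
    rw [hτ]
    exact ⟨hx, hlx⟩
  exact hmem.2

lemma mem_coneGen_of_apply_eq_zero {m n : ℕ} {g : Fin m → V} {h : Fin n → V}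
    (f : V →ₗ[ℚ] ℚ) (hf : ∀ i, 0 ≤ f (g i)) (hg : ∀ i, f (g i) = 0 → g i ∈ coneGen h)
    {x : V} (hx : x ∈ coneGen g) (hfx : f x = 0) : x ∈ coneGen h := by
  obtain ⟨c, hc, rfl⟩ := hx
  simp only [map_sum, map_smul, smul_eq_mul] at hfx
  have hterm := (Finset.sum_eq_zero_iff_of_nonneg fun i _ => mul_nonneg (hc i) (hf i)).1 hfx
  refine sum_mem_coneGen _ fun i hi => ?_
  rcases mul_eq_zero.1 (hterm i hi) with hci | hgi
  · simpa [hci] using zero_mem_coneGen h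
  · exact smul_mem_coneGen (hc i) (hg i hgi)

theorem exists_separating_of_isFaceOf_inter {σ σ' : Set V} (hσ : IsCone σ) (hσ' : IsCone σ')
    (hface : IsFaceOf (σ ∩ σ') σ) (hface' : IsFaceOf (σ ∩ σ') σ') :
    ∃ f : V →ₗ[ℚ] ℚ, (∀ x ∈ σ ∩ σ', f x = 0) ∧ (∀ x ∈ σ, x ∉ σ' → 0 < f x) ∧
      (∀ x ∈ σ', x ∉ σ → f x < 0) := by
  obtain ⟨m, g, rfl⟩ := hσ
  obtain ⟨n, h, rfl⟩ := hσ'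
  rw [Set.inter_comm] at hface'
  obtain ⟨f, hfu, hlin⟩ := exists_dual_nonneg_neg_mem_coneGen_of_apply_eq_zero (Fin.append g (-h))
  have hfg : ∀ i, 0 ≤ f (g i) := fun i => by simpa using hfu (Fin.castAdd n i)
  have hfh : ∀ j, 0 ≤ (-f) (h j) := fun j => by simpa using hfu (Fin.natAdd m j)
  have hg : ∀ i, f (g i) = 0 → g i ∈ coneGen h := fun i hi => by
    obtain ⟨a, ha, b, hb, hab⟩ :=
      coneGen_append_neg_subset g h (hlin (Fin.castAdd n i) (by simpa using hi))
    refine mem_of_add_mem_of_isFaceOf_inter hface ha (mem_coneGen g i) ?_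
    simp only [Fin.append_left] at hab
    rwa [show a + g i = b by rw [← neg_neg (g i), ← hab]; abel]
  have hh : ∀ j, (-f) (h j) = 0 → h j ∈ coneGen g := fun j hj => by
    obtain ⟨a, ha, b, hb, hab⟩ :=
      coneGen_append_neg_subset g h (hlin (Fin.natAdd m j) (by simpa using hj))
    refine mem_of_add_mem_of_isFaceOf_inter hface' hb (mem_coneGen h j) ?_
    simp only [Fin.append_right, Pi.neg_apply, neg_neg] at hab
    rwa [show b + h j = a by rw [← hab]; abel]
  refine ⟨f, fun x hx => ?_, fun x hx hx' => ?_, fun x hx hx' => ?_⟩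
  · have := apply_nonneg_of_mem_coneGen (-f) hfh hx.2
    simp only [LinearMap.neg_apply, neg_nonneg] at this
    exact le_antisymm this (apply_nonneg_of_mem_coneGen f hfg hx.1)
  · exact (apply_nonneg_of_mem_coneGen f hfg hx).lt_of_ne
      fun hfx => hx' (mem_coneGen_of_apply_eq_zero f hfg hg hx hfx.symm)
  · have := (apply_nonneg_of_mem_coneGen (-f) hfh hx).lt_of_ne
      fun hfx => hx' (mem_coneGen_of_apply_eq_zero (-f) hfh hh hx hfx.symm)
    simpa using this

end Separation

lemma isQuasiProjectiveFan_of_forall_isMaximalIn {V : Type*} [AddCommGroup V] [Module ℚ V]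
    {S : Set (Set V)} {σ σ' : Set V} (hmax : ∀ C, IsMaximalIn S C → C = σ ∨ C = σ')
    (f : V →ₗ[ℚ] ℚ) (hf : ∀ x ∈ σ ∩ σ', f x = 0) (hpos : ∀ x ∈ σ, x ∉ σ' → 0 < f x)
    (hneg : ∀ x ∈ σ', x ∉ σ → f x < 0) : IsQuasiProjectiveFan S := by
  classical
  refine ⟨fun C => if C = σ then f else 0, fun C hC C' hC' x hx => ?_,
    fun C hC C' hC' hne x hx hx' => ?_⟩
  · rcases hmax C hC with rfl | rfl <;> rcases hmax C' hC' with rfl | rfl <;> dsimp only <;>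
      split_ifs <;> simp_all [Set.inter_comm]
  · rcases hmax C hC with rfl | rfl <;> rcases hmax C' hC' with rfl | rfl <;> dsimp only <;>
      split_ifs <;> simp_all

theorem fan_with_two_maximal_cones_quasiProjective_general
    {V : Type*} [AddCommGroup V] [Module ℚ V]
    (S : Set (Set V)) (hS : IsFan S)
    (h : ∃ σ₁ ∈ S, ∃ σ₂ ∈ S, ∀ C ∈ S, C ⊆ σ₁ ∨ C ⊆ σ₂) :
    IsQuasiProjectiveFan S := by
  obtain ⟨σ₁, hσ₁, σ₂, hσ₂, hcover⟩ := h
  obtain ⟨-, hcone, -, hinter⟩ := hS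
  have hmax : ∀ C, IsMaximalIn S C → C = σ₁ ∨ C = σ₂ := fun C ⟨hC, hCmax⟩ =>
    (hcover C hC).imp (fun h₁ => (hCmax σ₁ hσ₁ h₁).symm) (fun h₂ => (hCmax σ₂ hσ₂ h₂).symm)
  obtain ⟨f, hf, hpos, hneg⟩ := exists_separating_of_isFaceOf_inter (hcone σ₁ hσ₁).1
    (hcone σ₂ hσ₂).1 (hinter σ₁ hσ₁ σ₂ hσ₂).1 (hinter σ₁ hσ₁ σ₂ hσ₂).2
  exact isQuasiProjectiveFan_of_forall_isMaximalIn hmax f hf hpos hneg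

/-- A fan with at most two maximal cones (i.e. admitting two
of its cones containing all the others) is quasi-projective. -/
theorem fan_with_two_maximal_cones_quasiProjective
    {V : Type*} [AddCommGroup V] [Module ℚ V] [FiniteDimensional ℚ V]
    (S : Set (Set V)) (hS : IsFan S)
    (h : ∃ σ₁ ∈ S, ∃ σ₂ ∈ S, ∀ C ∈ S, C ⊆ σ₁ ∨ C ⊆ σ₂) :
    IsQuasiProjectiveFan S :=
  fan_with_two_maximal_cones_quasiProjective_general S hS h
end
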